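/- Let w ∈ ℝ³ and u(x) = 3(1+|x|²)^{-2}((1-|x|²)w + 2(w·x)x + 2 w×x). Then div(|u| u) = 0 pointwise on ℝ³, although div u is not identically zero when w ≠ 0. -/

import Mathlib

noncomputable section
open MeasureTheory Real
open scoped BigOperators

/-- `ℝ³` with the Euclidean norm. -/
abbrev E3 : Type := EuclideanSpace ℝ (Fin 3)

/-- Build a vector of `E3` from components. -/
def toE3 (f : Fin 3 → ℝ) : E3 := (WithLp.equiv 2 (Fin 3 → ℝ)).symm f

/-- Euclidean inner product on `ℝ³`. -/
def ip (a b : E3) : ℝ := @inner ℝ _ _ a b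

/-- `i`-th partial derivative of a scalar function on `ℝ³`. -/
def pd (i : Fin 3) (f : E3 → ℝ) (x : E3) : ℝ :=
  fderiv ℝ f x (EuclideanSpace.single i 1)

/-- The curl `∇×v` of a vector field on `ℝ³`. -/
def curl (v : E3 → E3) (x : E3) : E3 :=
  toE3 ![pd 1 (fun y => v y 2) x - pd 2 (fun y => v y 1) x,
        pd 2 (fun y => v y 0) x - pd 0 (fun y => v y 2) x,
        pd 0 (fun y => v y 1) x - pd 1 (fun y => v y 0) x]

/-- The divergence of a vector field on `ℝ³`. -/
def div3 (v : E3 → E3) (x : E3) : ℝ :=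
  pd 0 (fun y => v y 0) x + pd 1 (fun y => v y 1) x + pd 2 (fun y => v y 2) x

/-- The cross product on `ℝ³`. -/
def cross3 (a b : E3) : E3 :=
  toE3 (crossProduct (WithLp.equiv 2 (Fin 3 → ℝ) a) (WithLp.equiv 2 (Fin 3 → ℝ) b))

/-- Squared Frobenius norm `|∇v|²` of the Jacobian of a vector field. -/
def jacNormSq (v : E3 → E3) (x : E3) : ℝ :=
  ∑ i : Fin 3, ∑ j : Fin 3, (pd i (fun y => v y j) x) ^ 2

/-- The Loss–Yau field `u(x) = 3(1+|x|²)⁻²((1-|x|²)w + 2(w·x)x + 2 w×x)`. -/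
def uLY (w : E3) (x : E3) : E3 :=
  (3 * ((1 + ‖x‖ ^ 2) ^ 2)⁻¹) •
    ((1 - ‖x‖ ^ 2) • w + (2 * ip w x) • x + (2 : ℝ) • cross3 w x)

def lv (w : E3) : Fin 3 → E3 :=
  ![toE3 ![0, -(w 2), w 1], toE3 ![w 2, 0, -(w 0)], toE3 ![-(w 1), w 0, 0]]

lemma pdF (c a : ℝ) (m : ℕ) (w l : E3) (j i : Fin 3) (x : E3) :
    pd i (fun y : E3 => c * ((1+‖y‖^2)^m)⁻¹ *
      ((1-‖y‖^2)*a + 2*(inner ℝ w y : ℝ)*(y j) + 2*(inner ℝ l y : ℝ))) x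
    = c * (-((m:ℝ) * (1+‖x‖^2)^(m-1)) / ((1+‖x‖^2)^m)^2 * (2 * x i)) *
        ((1-‖x‖^2)*a + 2*(inner ℝ w x : ℝ)*(x j) + 2*(inner ℝ l x : ℝ))
      + c * ((1+‖x‖^2)^m)⁻¹ *
        (-(2*x i)*a + 2*(w i)*(x j) + 2*(inner ℝ w x : ℝ)*(if j = i then 1 else 0) + 2*(l i)) := by
  have hne : ((1:ℝ) + ‖x‖^2)^m ≠ 0 := by positivity
  have hN : HasFDerivAt (fun y : E3 => ‖y‖^2) (2 • innerSL ℝ x) x :=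
    (hasStrictFDerivAt_norm_sq x).hasFDerivAt
  have hφ : HasDerivAt (fun t : ℝ => ((1+t)^m)⁻¹)
      (-((m:ℝ) * (1+‖x‖^2)^(m-1) * 1) / (((1+‖x‖^2)^m)^2)) (‖x‖^2) :=
    ((((hasDerivAt_id (‖x‖^2)).const_add 1).pow m).inv hne)
  have hq : HasFDerivAt (fun y : E3 => ((1+‖y‖^2)^m)⁻¹)
      ((-((m:ℝ) * (1+‖x‖^2)^(m-1) * 1) / (((1+‖x‖^2)^m)^2)) • (2 • innerSL ℝ x)) x :=
    hφ.comp_hasFDerivAt (f := fun y : E3 => ‖y‖^2) x hN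
  have hA := ((hasFDerivAt_const (1:ℝ) x).sub hN).mul_const a
  have hB := ((((innerSL ℝ w).hasFDerivAt (x := x)).const_mul (2:ℝ)).mul
    ((EuclideanSpace.proj j : E3 →L[ℝ] ℝ).hasFDerivAt (x := x)))
  have hC := ((innerSL ℝ l).hasFDerivAt (x := x)).const_mul (2:ℝ)
  have hV := (hA.add hB).add hC
  have hF := (hq.const_mul c).mul hV
  have hF' : HasFDerivAt (fun y : E3 => c * ((1+‖y‖^2)^m)⁻¹ *
      ((1-‖y‖^2)*a + 2*(inner ℝ w y : ℝ)*(y j) + 2*(inner ℝ l y : ℝ)))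
      ((c * ((1 + ‖x‖ ^ 2) ^ m)⁻¹) •
        (a • (0 - 2 • (innerSL ℝ) x) +
            ((2 * ((innerSL ℝ) w) x) • (EuclideanSpace.proj j : E3 →L[ℝ] ℝ) +
              (EuclideanSpace.proj j : E3 →L[ℝ] ℝ) x • (2:ℝ) • (innerSL ℝ) w) +
          (2:ℝ) • (innerSL ℝ) l) +
      ((1 - ‖x‖ ^ 2) * a + 2 * ((innerSL ℝ) w) x * (EuclideanSpace.proj j : E3 →L[ℝ] ℝ) x
          + 2 * ((innerSL ℝ) l) x) •
        c • (-((m:ℝ) * (1 + ‖x‖ ^ 2) ^ (m - 1) * 1) / ((1 + ‖x‖ ^ 2) ^ m) ^ 2) •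
          2 • (innerSL ℝ) x) x := hF
  rw [pd, hF'.fderiv]
  simp [EuclideanSpace.inner_single_right, EuclideanSpace.single_apply, real_inner_smul_left]
  split_ifs <;> ring

lemma uLY_apply (w y : E3) (j : Fin 3) :
    uLY w y j = 3 * ((1+‖y‖^2)^2)⁻¹ *
      ((1-‖y‖^2)*(w j) + 2*(inner ℝ w y : ℝ)*(y j) + 2*(inner ℝ (lv w j) y : ℝ)) := by
  fin_cases j <;>
    simp [uLY, ip, cross3, toE3, lv, crossProduct, PiLp.inner_apply, RCLike.inner_apply,
      Fin.sum_univ_three] <;> ring_nf <;> exact Or.inl trivial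

lemma norm_sq_coords (v : E3) : ‖v‖^2 = v 0 * v 0 + v 1 * v 1 + v 2 * v 2 := by
  rw [← real_inner_self_eq_norm_sq]
  simp only [PiLp.inner_apply, RCLike.inner_apply, conj_trivial, Fin.sum_univ_three]

lemma norm_uLY (w y : E3) : ‖uLY w y‖ = 3 * ‖w‖ * (1 + ‖y‖^2)⁻¹ := by
  have hpos : (0:ℝ) < 1 + ‖y‖^2 := by positivity
  have h1 : ‖uLY w y‖^2 = (3 * ‖w‖ * (1 + ‖y‖^2)⁻¹)^2 := by
    rw [norm_sq_coords (uLY w y)]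
    rw [uLY_apply, uLY_apply, uLY_apply]
    have hw : ‖w‖^2 = w 0 * w 0 + w 1 * w 1 + w 2 * w 2 := norm_sq_coords w
    have hy : ‖y‖^2 = y 0 * y 0 + y 1 * y 1 + y 2 * y 2 := norm_sq_coords y
    have hysum : y 0 * y 0 + y 1 * y 1 + y 2 * y 2 = ‖y‖^2 := hy.symm
    simp only [lv, toE3, PiLp.inner_apply, RCLike.inner_apply, Fin.sum_univ_three,
      conj_trivial, Matrix.cons_val_zero, Matrix.cons_val_one, Matrix.head_cons,
      Matrix.cons_val_two, Matrix.tail_cons, WithLp.equiv_symm_apply, PiLp.toLp_apply]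
    rw [mul_pow, mul_pow, hw, hy]
    have h2 : (1 + (y 0 * y 0 + y 1 * y 1 + y 2 * y 2)) ≠ 0 := by rw [hysum]; positivity
    field_simp
    ring
  have := congrArg Real.sqrt h1
  rwa [Real.sqrt_sq (norm_nonneg _), Real.sqrt_sq (by positivity)] at this

lemma gcomp (w : E3) (j : Fin 3) :
    (fun y : E3 => (‖uLY w y‖ • uLY w y) j)
      = fun y : E3 => (9*‖w‖) * ((1+‖y‖^2)^3)⁻¹ *
          ((1-‖y‖^2)*(w j) + 2*(inner ℝ w y : ℝ)*(y j) + 2*(inner ℝ (lv w j) y : ℝ)) := by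
  funext y
  have hpos : (0:ℝ) < 1 + ‖y‖^2 := by positivity
  have : (‖uLY w y‖ • uLY w y) j = ‖uLY w y‖ * uLY w y j := rfl
  rw [this, norm_uLY, uLY_apply]
  field_simp
  ring

lemma main1 (w : E3) (x : E3) : div3 (fun y => ‖uLY w y‖ • uLY w y) x = 0 := by
  have hpos : (0:ℝ) < 1 + ‖x‖^2 := by positivity
  rw [div3]
  simp only []
  rw [show (fun y : E3 => (fun y => ‖uLY w y‖ • uLY w y) y 0) = _ from gcomp w 0,
      show (fun y : E3 => (fun y => ‖uLY w y‖ • uLY w y) y 1) = _ from gcomp w 1,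
      show (fun y : E3 => (fun y => ‖uLY w y‖ • uLY w y) y 2) = _ from gcomp w 2,
      pdF (9*‖w‖) (w 0) 3 w (lv w 0) 0 0 x,
      pdF (9*‖w‖) (w 1) 3 w (lv w 1) 1 1 x,
      pdF (9*‖w‖) (w 2) 3 w (lv w 2) 2 2 x]
  have hx : ‖x‖^2 = x 0 * x 0 + x 1 * x 1 + x 2 * x 2 := norm_sq_coords x
  have h2 : (1 + (x 0 * x 0 + x 1 * x 1 + x 2 * x 2)) ≠ 0 := by rw [← hx]; positivity
  simp only [lv, toE3, PiLp.inner_apply, RCLike.inner_apply, Fin.sum_univ_three,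
    conj_trivial, Matrix.cons_val_zero, Matrix.cons_val_one, Matrix.head_cons,
    Matrix.cons_val_two, Matrix.tail_cons, WithLp.equiv_symm_apply, PiLp.toLp_apply, if_pos rfl]
  rw [hx]
  norm_num
  field_simp
  ring

lemma main2 (w : E3) (hw : w ≠ 0) : div3 (uLY w) w ≠ 0 := by
  have hpos : (0:ℝ) < 1 + ‖w‖^2 := by positivity
  have hval : div3 (uLY w) w = 6 * ‖w‖^2 * ((1+‖w‖^2)^2)⁻¹ := by
    rw [div3]
    rw [show (fun y : E3 => uLY w y 0) = _ from funext (fun y => uLY_apply w y 0),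
        show (fun y : E3 => uLY w y 1) = _ from funext (fun y => uLY_apply w y 1),
        show (fun y : E3 => uLY w y 2) = _ from funext (fun y => uLY_apply w y 2),
        pdF 3 (w 0) 2 w (lv w 0) 0 0 w,
        pdF 3 (w 1) 2 w (lv w 1) 1 1 w,
        pdF 3 (w 2) 2 w (lv w 2) 2 2 w]
    have hx : ‖w‖^2 = w 0 * w 0 + w 1 * w 1 + w 2 * w 2 := norm_sq_coords w
    have h2 : (1 + (w 0 * w 0 + w 1 * w 1 + w 2 * w 2)) ≠ 0 := by rw [← hx]; positivity
    simp only [lv, toE3, PiLp.inner_apply, RCLike.inner_apply, Fin.sum_univ_three,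
      conj_trivial, Matrix.cons_val_zero, Matrix.cons_val_one, Matrix.head_cons,
      Matrix.cons_val_two, Matrix.tail_cons, WithLp.equiv_symm_apply, PiLp.toLp_apply, if_pos rfl]
    rw [hx]
    norm_num
    field_simp
    ring
  rw [hval]
  have hwn : (0:ℝ) < ‖w‖ := by simpa using norm_pos_iff.mpr hw
  positivity


/-- `div(|u| u) = 0` pointwise for the Loss–Yau field, while `div u` is not
identically zero when `w ≠ 0`. -/
theorem div_norm_smul_uLY (w : E3) :
    (∀ x, div3 (fun y => ‖uLY w y‖ • uLY w y) x = 0) ∧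
      (w ≠ 0 → ¬ ∀ x, div3 (uLY w) x = 0) := by
  exact ⟨main1 w, fun hw hall => main2 w hw (hall w)⟩
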